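/- arXiv:1209.6543 — 3 statements merged into one kernel-verified Lean document; each statement's English description precedes it below -/
import Mathlib

section
/- With Q an n×n Hermitian positive definite complex matrix, Q̃ its real isomorph, and A_h = I₂ ⊗ e_h e_hᵀ, the matrix B_h = (Q̃^{-1/2} A_h Q̃^{-1/2}) / Re[Q⁻¹]_{hh} is idempotent: B_h² = B_h, provided Re[Q⁻¹]_{hh} ≠ 0. -/
open Matrix ComplexOrder

/-- The real isomorph of a complex matrix `Q`:
the block matrix `[[Re Q, -Im Q], [Im Q, Re Q]]`. -/
noncomputable def realIsomorph {n : ℕ} (Q : Matrix (Fin n) (Fin n) ℂ) :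
    Matrix (Fin n ⊕ Fin n) (Fin n ⊕ Fin n) ℝ :=
  Matrix.fromBlocks (Q.map Complex.re) (-(Q.map Complex.im))
    (Q.map Complex.im) (Q.map Complex.re)

/-- `A_h = I₂ ⊗ e_h e_hᵀ`. -/
noncomputable def Amat {n : ℕ} (h : Fin n) :
    Matrix (Fin n ⊕ Fin n) (Fin n ⊕ Fin n) ℝ :=
  Matrix.fromBlocks (Matrix.single h h 1) 0 0 (Matrix.single h h 1)

/- Write `B = S A_h S / c` with `c = Re[Q⁻¹]_{hh}` and `S² = Q̃⁻¹`, so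
`B² = S (A_h Q̃⁻¹ A_h) S / c²`. Taking real isomorphs is multiplicative, so `Q̃⁻¹` is the real
isomorph of `Q⁻¹`, and `A_h` cuts out of it the `(h, h)` entries of its four blocks,
`Re, -Im, Im, Re` of `(Q⁻¹)_{hh}`. That entry is real because `Q⁻¹` is Hermitian, hence
`A_h Q̃⁻¹ A_h = c A_h` and `B² = B`. -/

theorem isIdempotentElem_inv_smul_mul_mul {R A : Type*} [Field R] [Ring A] [Algebra R A]
    {S X : A} {c : R} (hc : c ≠ 0) (hX : X * (S * S) * X = c • X) :
    IsIdempotentElem (c⁻¹ • (S * X * S)) :=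
  calc c⁻¹ • (S * X * S) * c⁻¹ • (S * X * S)
      = (c⁻¹ * c⁻¹) • (S * (X * (S * S) * X) * S) := by
        rw [smul_mul_smul_comm]; noncomm_ring
    _ = c⁻¹ • (S * X * S) := by
        rw [hX, mul_smul_comm, smul_mul_assoc, smul_smul, inv_mul_cancel_right₀ hc]

theorem Matrix.IsHermitian.im_apply_self {m : Type*} {A : Matrix m m ℂ} (hA : A.IsHermitian)
    (i : m) : (A i i).im = 0 :=
  Complex.conj_eq_iff_im.mp (hA.apply i i)

section realIsomorph

variable {n : ℕ}

theorem realIsomorph_mul (M N : Matrix (Fin n) (Fin n) ℂ) :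
    realIsomorph (M * N) = realIsomorph M * realIsomorph N := by
  ext (i | i) (j | j) <;>
    simp [realIsomorph, fromBlocks, mul_apply, Complex.mul_re, Complex.mul_im,
      Finset.sum_add_distrib, sub_eq_add_neg] <;> ring

theorem realIsomorph_one : realIsomorph (1 : Matrix (Fin n) (Fin n) ℂ) = 1 := by
  ext (i | i) (j | j) <;>
    simp [realIsomorph, one_apply, apply_ite Complex.im]

theorem realIsomorph_inv {M : Matrix (Fin n) (Fin n) ℂ} (hM : IsUnit M.det) :
    (realIsomorph M)⁻¹ = realIsomorph M⁻¹ :=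
  inv_eq_right_inv <| by rw [← realIsomorph_mul, mul_nonsing_inv _ hM, realIsomorph_one]

theorem Amat_mul_realIsomorph_mul_Amat {M : Matrix (Fin n) (Fin n) ℂ} {h : Fin n}
    (hM : (M h h).im = 0) : Amat h * realIsomorph M * Amat h = (M h h).re • Amat h := by
  simp [Amat, realIsomorph, fromBlocks_multiply, fromBlocks_smul, hM]

end realIsomorph

theorem Bmat_idempotent_general {n : ℕ} (Q : Matrix (Fin n) (Fin n) ℂ) (hQ : Q.PosDef)
    (h : Fin n) (S : Matrix (Fin n ⊕ Fin n) (Fin n ⊕ Fin n) ℝ)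
    (hSsq : S * S = (realIsomorph Q)⁻¹)
    (hne : (Q⁻¹ h h).re ≠ 0) :
    (((Q⁻¹ h h).re)⁻¹ • (S * Amat h * S)) * (((Q⁻¹ h h).re)⁻¹ • (S * Amat h * S))
      = ((Q⁻¹ h h).re)⁻¹ • (S * Amat h * S) := by
  refine isIdempotentElem_inv_smul_mul_mul hne ?_
  rw [hSsq, realIsomorph_inv hQ.det_pos.ne'.isUnit]
  exact Amat_mul_realIsomorph_mul_Amat (hQ.isHermitian.inv.im_apply_self h)

/-- If `S = Q̃^{-1/2}` is the positive definite square root of `Q̃⁻¹` and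
`Re[Q⁻¹]_{hh} ≠ 0`, then `B_h = (S A_h S) / Re[Q⁻¹]_{hh}` is idempotent. -/
theorem Bmat_idempotent {n : ℕ} (Q : Matrix (Fin n) (Fin n) ℂ) (hQ : Q.PosDef)
    (h : Fin n) (S : Matrix (Fin n ⊕ Fin n) (Fin n ⊕ Fin n) ℝ)
    (hS : S.PosDef) (hSsq : S * S = (realIsomorph Q)⁻¹)
    (hne : (Q⁻¹ h h).re ≠ 0) :
    (((Q⁻¹ h h).re)⁻¹ • (S * Amat h * S)) * (((Q⁻¹ h h).re)⁻¹ • (S * Amat h * S))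
      = ((Q⁻¹ h h).re)⁻¹ • (S * Amat h * S) :=
  Bmat_idempotent_general Q hQ h S hSsq hne
end

section
/- Let ζ₁,…,ζ_p ∈ ℂ be pairwise distinct and γ₁,…,γ_p ∈ ℂ nonzero, and set s_k = Σ_{j=1}^p γ_j ζ_j^k for k = 0,…,2p-1. Let U₀ = (s_{i+j})_{0≤i,j≤p-1} and U₁ = (s_{i+j+1})_{0≤i,j≤p-1} be the two p×p Hankel matrices. Then det(U₁ - z U₀) = 0 if and only if z ∈ {ζ₁,…,ζ_p}; i.e. the ζ_j are exactly the generalized eigenvalues of the pencil (U₁, U₀). -/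
/-!
Writing `V` for the Vandermonde matrix of the nodes, the moment identity gives the congruence
`U₁ - z U₀ = Vᵀ · diag(γ_j (ζ_j - z)) · V`. Distinct nodes make `V` invertible, so the pencil is
singular exactly when one of the diagonal entries `γ_j (ζ_j - z)` vanishes, i.e. when `z = ζ_j`.
-/

namespace Matrix

variable {R : Type*} [CommRing R] {n : ℕ}

theorem vandermonde_transpose_mul_diagonal_mul_vandermonde_apply (ζ w : Fin n → R)
    (i j : Fin n) :
    ((vandermonde ζ)ᵀ * diagonal w * vandermonde ζ) i j = ∑ k, w k * ζ k ^ ((i : ℕ) + j) := by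
  simp only [mul_apply, transpose_apply, vandermonde_apply, diagonal_apply, mul_ite, mul_zero,
    Finset.sum_ite_eq', Finset.mem_univ, if_true]
  exact Finset.sum_congr rfl fun k _ => by ring

theorem det_vandermonde_transpose_mul_diagonal_mul_vandermonde_eq_zero_iff [IsDomain R]
    {ζ : Fin n → R} (hζ : Function.Injective ζ) (w : Fin n → R) :
    ((vandermonde ζ)ᵀ * diagonal w * vandermonde ζ).det = 0 ↔ ∃ j, w j = 0 := by
  have hV : (vandermonde ζ).det ≠ 0 := det_vandermonde_ne_zero_iff.2 hζ
  simp [det_mul, det_diagonal, Finset.prod_eq_zero_iff, hV]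

end Matrix

open Matrix

/-- For `s_k = Σ_j γ_j ζ_j^k` with pairwise distinct `ζ_j` and nonzero `γ_j`,
the `ζ_j` are exactly the generalized eigenvalues of the Hankel pencil
`(U₁, U₀)`: `det(U₁ - z U₀) = 0 ↔ z ∈ {ζ₁,…,ζ_p}`. -/
theorem hankel_pencil_generalized_eigenvalues {p : ℕ}
    (ζ γ : Fin p → ℂ) (hζ : Function.Injective ζ) (hγ : ∀ j, γ j ≠ 0)
    (s : ℕ → ℂ) (hs : ∀ k, s k = ∑ j, γ j * ζ j ^ k)
    (U₀ U₁ : Matrix (Fin p) (Fin p) ℂ)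
    (hU₀ : ∀ i j, U₀ i j = s ((i : ℕ) + j))
    (hU₁ : ∀ i j, U₁ i j = s ((i : ℕ) + j + 1)) :
    ∀ z : ℂ, (U₁ - z • U₀).det = 0 ↔ ∃ j, z = ζ j := by
  intro z
  have hpencil : U₁ - z • U₀ =
      (vandermonde ζ)ᵀ * diagonal (fun j => γ j * (ζ j - z)) * vandermonde ζ := by
    ext i k
    simp only [vandermonde_transpose_mul_diagonal_mul_vandermonde_apply, Matrix.sub_apply,
      Matrix.smul_apply, hU₀, hU₁, hs, smul_eq_mul, Finset.mul_sum, ← Finset.sum_sub_distrib]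
    exact Finset.sum_congr rfl fun j _ => by ring
  rw [hpencil, det_vandermonde_transpose_mul_diagonal_mul_vandermonde_eq_zero_iff hζ]
  simp [hγ, sub_eq_zero, eq_comm]
end

section
/- Let n = 2p, and consider the map T⁻¹: (ζ₁,…,ζ_p, γ₁,…,γ_p) ↦ (a₀,…,a_{n-1}) with a_k = Σ_{j=1}^p γ_j ζ_j^k. Its complex Jacobian determinant equals (−1)^p ∏_{j=1}^p γ_j · ∏_{j<h}(ζ_j − ζ_h)⁴ (up to sign convention), and in particular it is nonzero whenever the ζ_j are pairwise distinct and all γ_j ≠ 0. -/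
/-
Up to scaling its derivative columns by the `γ j`, the Jacobian is the confluent Vandermonde
matrix of the `ζ j`. Deform it over `ℂ[X]`: the ordinary Vandermonde matrix on the nodes
`ζ j + X, ζ j` becomes, after subtracting from each `ζ j + X` column the `ζ j` column, `X` times a
difference-quotient column, so its determinant is `X ^ p` times that of a polynomial matrix whose
value at `X = 0` is the confluent Vandermonde matrix. Splitting the Vandermonde product into the
pairs within and across the two families of nodes, cancelling `X ^ p` and setting `X = 0` leaves
`(-1) ^ p ∏_{a<b} (ζ b - ζ a) ^ 2 ∏_{a ≠ b} (ζ b - ζ a)`, i.e. `± (-1) ^ p ∏_{a<b} (ζ a - ζ b) ^ 4`.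
-/

open Matrix Finset

/-- The complex Jacobian matrix of the map
`T⁻¹ : (ζ₁,…,ζ_p,γ₁,…,γ_p) ↦ (a₀,…,a_{2p-1})`, `a_k = Σ_j γ_j ζ_j^k`:
rows are indexed by `k = 0,…,2p-1` (via `finSumFinEquiv`), columns by the
variables, with entries `∂a_k/∂ζ_j = γ_j k ζ_j^{k-1}` and `∂a_k/∂γ_j = ζ_j^k`. -/
noncomputable def jacobianT {p : ℕ} (ζ γ : Fin p → ℂ) :
    Matrix (Fin p ⊕ Fin p) (Fin p ⊕ Fin p) ℂ :=
  fun i j =>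
    Sum.elim
      (fun jz => γ jz * ((finSumFinEquiv i : ℕ) : ℂ) * ζ jz ^ ((finSumFinEquiv i : ℕ) - 1))
      (fun jg => ζ jg ^ (finSumFinEquiv i : ℕ)) j

theorem Fin.prod_prod_Ioi_add {M : Type*} [CommMonoid M] {m n : ℕ}
    (f : Fin (m + n) → Fin (m + n) → M) :
    ∏ i, ∏ j ∈ Ioi i, f i j =
      (∏ a : Fin m, ∏ b ∈ Ioi a, f (castAdd n a) (castAdd n b)) *
        (∏ a : Fin m, ∏ b : Fin n, f (castAdd n a) (natAdd m b)) *
        ∏ a : Fin n, ∏ b ∈ Ioi a, f (natAdd m a) (natAdd m b) := by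
  have castAdd_lt_natAdd (a : Fin m) (b : Fin n) : castAdd n a < natAdd m b := by
    simp only [Fin.lt_def, val_castAdd, val_natAdd]; omega
  have not_natAdd_lt_castAdd (a : Fin n) (b : Fin m) : ¬ natAdd m a < castAdd n b := by
    simp only [Fin.lt_def, val_castAdd, val_natAdd]; omega
  simp only [← Finset.filter_lt_eq_Ioi, Finset.prod_filter, Fin.prod_univ_add,
    (strictMono_castAdd n).lt_iff_lt, natAdd_lt_natAdd_iff, castAdd_lt_natAdd,
    not_natAdd_lt_castAdd, if_true, if_false, prod_const_one, one_mul, Finset.prod_mul_distrib,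
    mul_assoc]

namespace Matrix

variable {R : Type*} [CommRing R]

theorem det_vandermonde_append {m n : ℕ} (u : Fin m → R) (w : Fin n → R) :
    (vandermonde (Fin.append u w)).det =
      (∏ a, ∏ b ∈ Ioi a, (u b - u a)) * (∏ a, ∏ b, (w b - u a)) *
        ∏ a, ∏ b ∈ Ioi a, (w b - w a) := by
  simp only [det_vandermonde, Fin.prod_prod_Ioi_add, Fin.append_left, Fin.append_right]

section Confluent

open Polynomial

variable {p : ℕ}

noncomputable def confluentVandermonde (x : Fin p → R) :
    Matrix (Fin p ⊕ Fin p) (Fin p ⊕ Fin p) R :=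
  of fun i => Sum.elim (fun a => ((finSumFinEquiv i : ℕ) : R) * x a ^ ((finSumFinEquiv i : ℕ) - 1))
    (fun a => x a ^ (finSumFinEquiv i : ℕ))

/-- Column `inl a` is the difference quotient `((X + x a) ^ k - x a ^ k) / X`, which specialises
to the derivative column `k * x a ^ (k - 1)` at `X = 0`. -/
noncomputable def confluentVandermondeDeformation (x : Fin p → R) :
    Matrix (Fin p ⊕ Fin p) (Fin p ⊕ Fin p) R[X] :=
  of fun i => Sum.elim (fun a => divX ((X + C (x a)) ^ (finSumFinEquiv i : ℕ)))
    (fun a => C (x a) ^ (finSumFinEquiv i : ℕ))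

theorem confluentVandermondeDeformation_map_eval_zero (x : Fin p → R) :
    (confluentVandermondeDeformation x).map (eval 0) = confluentVandermonde x := by
  ext i (a | a)
  · simp [confluentVandermondeDeformation, confluentVandermonde, ← coeff_zero_eq_eval_zero,
      coeff_divX, coeff_X_add_C_pow, mul_comm]
  · simp [confluentVandermondeDeformation, confluentVandermonde]

theorem vandermonde_transpose_submatrix_eq (x : Fin p → R) :
    (vandermonde (Fin.append (fun a => X + C (x a)) (fun a => C (x a))))ᵀ.submatrix
        finSumFinEquiv finSumFinEquiv =
      confluentVandermondeDeformation x * fromBlocks (diagonal fun _ => X) 0 1 1 := by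
  refine Matrix.ext fun i j => ?_
  rcases j with a | a
  · simp only [submatrix_apply, transpose_apply, vandermonde_apply, finSumFinEquiv_apply_left,
      Fin.append_left, mul_apply, Fintype.sum_sum_type, fromBlocks_apply₁₁, fromBlocks_apply₂₁,
      diagonal_apply, one_apply, mul_ite, mul_zero, mul_one, sum_ite_eq', mem_univ, if_true]
    rw [← X_mul_divX_add ((X + C (x a)) ^ _)]
    simp [confluentVandermondeDeformation, coeff_X_add_C_pow, mul_comm]
  · simp only [submatrix_apply, transpose_apply, vandermonde_apply, finSumFinEquiv_apply_right,
      Fin.append_right, mul_apply, Fintype.sum_sum_type, fromBlocks_apply₁₂, fromBlocks_apply₂₂,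
      zero_apply, one_apply, mul_ite, mul_zero, mul_one, sum_ite_eq', mem_univ, if_true,
      sum_const_zero, zero_add]
    simp [confluentVandermondeDeformation]

theorem det_confluentVandermondeDeformation_mul_X_pow (x : Fin p → R) :
    (confluentVandermondeDeformation x).det * X ^ p =
      (vandermonde (Fin.append (fun a => X + C (x a)) (fun a => C (x a)))).det := by
  rw [← det_transpose (vandermonde _), ← det_submatrix_equiv_self finSumFinEquiv,
    vandermonde_transpose_submatrix_eq, det_mul, det_fromBlocks_zero₁₂, det_diagonal, det_one,
    prod_const, card_univ, Fintype.card_fin, mul_one]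

theorem det_confluentVandermondeDeformation (x : Fin p → R) :
    (confluentVandermondeDeformation x).det =
      (-1) ^ p * (∏ a, ∏ b ∈ Ioi a, (C (x b) - C (x a))) ^ 2 *
        ∏ a, ∏ b ∈ {a}ᶜ, (C (x b) - (X + C (x a))) := by
  refine (isRegular_X_pow p).right ?_
  have diagonal_factor (a : Fin p) : ∏ b, (C (x b) - (X + C (x a))) =
      -X * ∏ b ∈ {a}ᶜ, (C (x b) - (X + C (x a))) := by
    rw [Fintype.prod_eq_mul_prod_compl a]; ring
  simp only [det_confluentVandermondeDeformation_mul_X_pow, det_vandermonde_append,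
    add_sub_add_left_eq_sub, diagonal_factor, prod_mul_distrib, prod_const, card_univ,
    Fintype.card_fin]
  ring

theorem det_confluentVandermonde (x : Fin p → R) :
    (confluentVandermonde x).det = (-1) ^ p * ∏ a, ∏ b ∈ Ioi a, -(x a - x b) ^ 4 := by
  rw [← confluentVandermondeDeformation_map_eval_zero, ← coe_evalRingHom,
    ← RingHom.mapMatrix_apply, ← RingHom.map_det, det_confluentVandermondeDeformation]
  simp only [map_mul, map_pow, map_neg, map_one, map_prod, map_sub, coe_evalRingHom, eval_C,
    eval_add, eval_X, zero_add]
  rw [← prod_prod_Ioi_mul_eq_prod_prod_off_diag, sq, ← prod_mul_distrib, mul_assoc,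
    ← prod_mul_distrib]
  congr 1
  refine prod_congr rfl fun a _ => ?_
  rw [← prod_mul_distrib, ← prod_mul_distrib]
  refine prod_congr rfl fun b _ => ?_
  ring

end Confluent

end Matrix

theorem jacobianT_eq_confluentVandermonde_mul_diagonal {p : ℕ} (ζ γ : Fin p → ℂ) :
    jacobianT ζ γ = confluentVandermonde ζ * diagonal (Sum.elim γ 1) := by
  ext i (a | a)
  · simp only [jacobianT, confluentVandermonde, mul_diagonal, of_apply, Sum.elim_inl]
    ring
  · simp [jacobianT, confluentVandermonde, mul_diagonal]

theorem det_jacobianT {p : ℕ} (ζ γ : Fin p → ℂ) :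
    (jacobianT ζ γ).det = (-1) ^ (∑ a : Fin p, #(Ioi a)) *
      ((-1) ^ p * (∏ j, γ j) * ∏ j, ∏ h ∈ Ioi j, (ζ j - ζ h) ^ 4) := by
  rw [jacobianT_eq_confluentVandermonde_mul_diagonal, det_mul, det_confluentVandermonde,
    det_diagonal, Fintype.prod_sum_type]
  simp only [prod_neg, prod_mul_distrib, prod_pow_eq_pow_sum, Sum.elim_inl, Sum.elim_inr,
    Pi.one_apply, prod_const_one, mul_one]
  ring

/-- The complex Jacobian determinant of `T⁻¹` equals, up to sign convention,
`(−1)^p ∏_j γ_j ∏_{j<h} (ζ_j − ζ_h)⁴`; in particular it is nonzero when the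
`ζ_j` are pairwise distinct and all `γ_j ≠ 0`. -/
theorem jacobianT_det {p : ℕ} (ζ γ : Fin p → ℂ)
    (hζ : Function.Injective ζ) (hγ : ∀ j, γ j ≠ 0) :
    ((jacobianT ζ γ).det =
        (-1) ^ p * (∏ j, γ j) * ∏ j, ∏ h ∈ Finset.Ioi j, (ζ j - ζ h) ^ 4 ∨
      (jacobianT ζ γ).det =
        -((-1) ^ p * (∏ j, γ j) * ∏ j, ∏ h ∈ Finset.Ioi j, (ζ j - ζ h) ^ 4)) ∧
    (jacobianT ζ γ).det ≠ 0 := by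
  have hζ_sub (j h : Fin p) (hjh : h ∈ Ioi j) : (ζ j - ζ h) ^ 4 ≠ 0 :=
    pow_ne_zero _ (sub_ne_zero.mpr (hζ.ne (mem_Ioi.mp hjh).ne))
  have hE : (-1) ^ p * (∏ j, γ j) * ∏ j, ∏ h ∈ Ioi j, (ζ j - ζ h) ^ 4 ≠ 0 :=
    mul_ne_zero (mul_ne_zero (by simp) (prod_ne_zero_iff.mpr fun j _ => hγ j))
      (prod_ne_zero_iff.mpr fun j _ => prod_ne_zero_iff.mpr (hζ_sub j))
  rw [det_jacobianT]
  exact ⟨(neg_one_pow_eq_or ℂ (∑ a : Fin p, #(Ioi a))).imp (fun h => by rw [h, one_mul])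
    (fun h => by rw [h, neg_one_mul]), mul_ne_zero (by simp) hE⟩
end
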